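/- Let f : ℝⁿ → ℝⁿ be a homeomorphism such that f(x) = x whenever ‖x‖ ≥ 1. Define H : ℝⁿ × [0,1] → ℝⁿ by H(x,t) = t·f(x/t) for t > 0 and H(x,0) = x. Then H is jointly continuous, H(·,1) = f, H(·,0) = id, and for each fixed t ∈ [0,1] the map H(·,t) : ℝⁿ → ℝⁿ is a bijection. -/
import Mathlib


open Metric Filter Topology

/-- **Alexander trick.** For a homeomorphism `f` of `ℝⁿ` that is the identity outside the
unit ball, the Alexander homotopy `H(x,t) = t • f(x/t)` (with `H(x,0) = x`) is jointly
continuous on `ℝⁿ × [0,1]`, interpolates from the identity to `f`, and is a bijection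
for each fixed time `t ∈ [0,1]`. -/
theorem alexander_trick (n : ℕ)
    (f : EuclideanSpace ℝ (Fin n) ≃ₜ EuclideanSpace ℝ (Fin n))
    (hf : ∀ x : EuclideanSpace ℝ (Fin n), 1 ≤ ‖x‖ → f x = x)
    (H : EuclideanSpace ℝ (Fin n) × ℝ → EuclideanSpace ℝ (Fin n))
    (hHpos : ∀ (x : EuclideanSpace ℝ (Fin n)) (t : ℝ), 0 < t → H (x, t) = t • f (t⁻¹ • x))
    (hH0 : ∀ x : EuclideanSpace ℝ (Fin n), H (x, 0) = x) :
    ContinuousOn H (Set.univ ×ˢ Set.Icc (0 : ℝ) 1) ∧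
    (∀ x, H (x, 1) = f x) ∧
    (∀ x, H (x, 0) = x) ∧
    ∀ t ∈ Set.Icc (0 : ℝ) 1, Function.Bijective fun x => H (x, t) := by
  -- f maps the closed unit ball into itself
  have hball : ∀ y : EuclideanSpace ℝ (Fin n), ‖y‖ ≤ 1 → ‖f y‖ ≤ 1 := by
    intro y hy
    by_cases h : 1 ≤ ‖f y‖
    · have := hf (f y) h
      have : (f y : EuclideanSpace ℝ (Fin n)) = y := f.injective this
      rw [this]; exact hy
    · linarith [not_le.mp h]
  -- key estimate
  have hdiff : ∀ (x : EuclideanSpace ℝ (Fin n)) (t : ℝ), 0 ≤ t →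
      ‖H (x, t) - x‖ ≤ 2 * t := by
    intro x t ht
    rcases eq_or_lt_of_le ht with h0 | h0
    · rw [← h0, hH0]; simp
    · rw [hHpos x t h0]
      by_cases hx : t ≤ ‖x‖
      · have h1 : (1 : ℝ) ≤ ‖t⁻¹ • x‖ := by
          rw [norm_smul, Real.norm_eq_abs, abs_of_pos (inv_pos.mpr h0)]
          calc (1 : ℝ) = t⁻¹ * t := (inv_mul_cancel₀ h0.ne').symm
            _ ≤ t⁻¹ * ‖x‖ := by gcongr
        rw [hf _ h1, smul_smul, mul_inv_cancel₀ h0.ne', one_smul]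
        simp; linarith
      · push_neg at hx
        have h1 : ‖t⁻¹ • x‖ ≤ 1 := by
          rw [norm_smul, Real.norm_eq_abs, abs_of_pos (inv_pos.mpr h0)]
          calc t⁻¹ * ‖x‖ ≤ t⁻¹ * t := by gcongr
            _ = 1 := inv_mul_cancel₀ h0.ne'
        have h2 : ‖t • f (t⁻¹ • x)‖ ≤ t := by
          rw [norm_smul, Real.norm_eq_abs, abs_of_pos h0]
          nlinarith [hball _ h1]
        calc ‖t • f (t⁻¹ • x) - x‖ ≤ ‖t • f (t⁻¹ • x)‖ + ‖x‖ := norm_sub_le _ _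
          _ ≤ t + t := by linarith
          _ = 2 * t := by ring
  refine ⟨?_, ?_, hH0, ?_⟩
  · -- continuity
    intro p hp
    obtain ⟨x₀, t₀⟩ := p
    rcases eq_or_lt_of_le hp.2.1 with h0 | h0
    · -- t₀ = 0
      have h0 : t₀ = 0 := h0.symm
      subst h0
      rw [ContinuousWithinAt, hH0]
      have key : Tendsto (fun p : EuclideanSpace ℝ (Fin n) × ℝ => H p - p.1)
          (nhdsWithin (x₀, 0) (Set.univ ×ˢ Set.Icc (0 : ℝ) 1)) (nhds 0) := by
        apply squeeze_zero_norm' (a := fun p : EuclideanSpace ℝ (Fin n) × ℝ => 2 * p.2)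
        · filter_upwards [self_mem_nhdsWithin] with p hp
          exact hdiff p.1 p.2 hp.2.1
        · have : Tendsto (fun p : EuclideanSpace ℝ (Fin n) × ℝ => 2 * p.2)
              (nhds (x₀, (0 : ℝ))) (nhds 0) := by
            have hc : Continuous (fun p : EuclideanSpace ℝ (Fin n) × ℝ => 2 * p.2) :=
              continuous_const.mul continuous_snd
            simpa using hc.tendsto (x₀, (0:ℝ))
          exact this.mono_left nhdsWithin_le_nhds
      have h1 : Tendsto (fun p : EuclideanSpace ℝ (Fin n) × ℝ => p.1)
          (nhdsWithin (x₀, 0) (Set.univ ×ˢ Set.Icc (0 : ℝ) 1)) (nhds x₀) :=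
        (continuous_fst.tendsto _).mono_left nhdsWithin_le_nhds
      have := h1.add key
      simpa using this
    · -- t₀ > 0
      apply ContinuousAt.continuousWithinAt
      have hg : ContinuousAt (fun p : EuclideanSpace ℝ (Fin n) × ℝ =>
          p.2 • f (p.2⁻¹ • p.1)) (x₀, t₀) := by
        apply ContinuousAt.smul continuousAt_snd
        exact (f.continuous.continuousAt).comp
          ((continuousAt_snd.inv₀ h0.ne').smul continuousAt_fst)
      apply hg.congr
      have hopen : IsOpen {p : EuclideanSpace ℝ (Fin n) × ℝ | 0 < p.2} :=
        isOpen_lt continuous_const continuous_snd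
      filter_upwards [hopen.mem_nhds h0] with p hp
      exact (hHpos p.1 p.2 hp).symm
  · -- H(x,1) = f x
    intro x
    rw [hHpos x 1 one_pos]; simp
  · -- bijectivity
    intro t ht
    rcases eq_or_lt_of_le ht.1 with h0 | h0
    · have : ∀ x, H (x, t) = x := by intro x; rw [← h0, hH0]
      simp only [this]
      exact Function.bijective_id
    · have hne := h0.ne'
      refine Function.bijective_iff_has_inverse.mpr
        ⟨fun x => t • f.symm (t⁻¹ • x), ?_, ?_⟩
      · intro x
        show t • f.symm (t⁻¹ • H (x, t)) = x
        rw [hHpos x t h0, smul_smul, inv_mul_cancel₀ hne, one_smul,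
          f.symm_apply_apply, smul_smul, mul_inv_cancel₀ hne, one_smul]
      · intro x
        show H (t • f.symm (t⁻¹ • x), t) = x
        rw [hHpos _ t h0, smul_smul, inv_mul_cancel₀ hne, one_smul,
          f.apply_symm_apply, smul_smul, mul_inv_cancel₀ hne, one_smul]
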